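/- k-step quadratic-energy identity: let M and Q be real d×d matrices with M symmetric and Q skew-symmetric, let k be a positive integer, h ∈ ℝ, w, x ∈ ℝ^d, and set x' = exp(k h Q M)·x + k h·φ(k h Q M)·Q·w. Then (1/(2k))·x'ᵀMx' − (1/(2k))·xᵀMx + (1/k)·(x' − x)ᵀw = 0. -/

import Mathlib

open Matrix MeasureTheory

/-- `phi V = ∫₀¹ exp((1-τ)V) dτ`, the integral taken entrywise. -/
noncomputable def phi {d : ℕ} (V : Matrix (Fin d) (Fin d) ℝ) :
    Matrix (Fin d) (Fin d) ℝ :=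
  Matrix.of fun i j => ∫ τ in (0:ℝ)..1, NormedSpace.exp ((1 - τ) • V) i j

/-! The point `x'` is the exact time-`kh` value of the solution of `y' = Q (M y + w)` from `x`,
a Hamiltonian flow for `H y = yᵀ M y / 2 + yᵀ w` with skew-symmetric structure matrix, so `H` is
conserved. Absorbing `kh` into `Q`, and writing `A = exp (Q M)`, `B = φ (Q M) Q`, conservation
reduces to the three matrix identities `Aᵀ M A = M`, `Aᵀ M B = 1 - Aᵀ`, `Bᵀ M B + Bᵀ + B = 0`.
They follow from `φ V * V = exp V - 1`, `M φ (Q M) = φ (M Q) M`, `φ (-X) exp X = φ X` and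
`(φ V)ᵀ = φ Vᵀ`. -/

section IntervalIntegral

variable {l m n : Type*} [Fintype m]

lemma mul_of_intervalIntegral (A : Matrix l m ℝ) {F : ℝ → Matrix m n ℝ} (hF : Continuous F)
    (a b : ℝ) :
    A * of (fun i j => ∫ τ in a..b, F τ i j) = of fun i j => ∫ τ in a..b, (A * F τ) i j := by
  ext i j
  simp only [mul_apply, of_apply, ← intervalIntegral.integral_const_mul]
  exact (intervalIntegral.integral_finsetSum fun k _ =>
    (continuous_const.mul (hF.matrix_elem k j)).intervalIntegrable a b).symm

lemma of_intervalIntegral_mul {F : ℝ → Matrix l m ℝ} (hF : Continuous F) (A : Matrix m n ℝ)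
    (a b : ℝ) :
    of (fun i j => ∫ τ in a..b, F τ i j) * A = of fun i j => ∫ τ in a..b, (F τ * A) i j := by
  ext i j
  simp only [mul_apply, of_apply, ← intervalIntegral.integral_mul_const]
  exact (intervalIntegral.integral_finsetSum fun k _ =>
    ((hF.matrix_elem i k).mul continuous_const).intervalIntegrable a b).symm

end IntervalIntegral

section Exp

variable {n : Type*} [Fintype n] [DecidableEq n]

lemma SemiconjBy.matrix_exp_right {A V W : Matrix n n ℝ} (h : SemiconjBy A V W) :
    SemiconjBy A (NormedSpace.exp V) (NormedSpace.exp W) := by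
  let _ : NormedRing (Matrix n n ℝ) := Matrix.linftyOpNormedRing
  let _ : NormedAlgebra ℝ (Matrix n n ℝ) := Matrix.linftyOpNormedAlgebra
  let _ : NormedAlgebra ℚ (Matrix n n ℝ) := NormedAlgebra.restrictScalars ℚ ℝ _
  exact h.exp_right

lemma exp_neg_mul_exp (X : Matrix n n ℝ) : NormedSpace.exp (-X) * NormedSpace.exp X = 1 := by
  rw [← exp_add_of_commute _ _ (Commute.refl X).neg_left, neg_add_cancel, NormedSpace.exp_zero]

lemma hasDerivAt_exp_smul_apply (V : Matrix n n ℝ) (i j : n) (t : ℝ) :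
    HasDerivAt (fun τ : ℝ => NormedSpace.exp (τ • V) i j)
      ((NormedSpace.exp (t • V) * V) i j) t := by
  let _ : NormedRing (Matrix n n ℝ) := Matrix.linftyOpNormedRing
  let _ : NormedAlgebra ℝ (Matrix n n ℝ) := Matrix.linftyOpNormedAlgebra
  exact (entryLinearMap ℝ ℝ i j).toContinuousLinearMap.hasFDerivAt.comp_hasDerivAt t
    (hasDerivAt_exp_smul_const V t)

lemma continuous_exp_smul (V : Matrix n n ℝ) :
    Continuous fun τ : ℝ => NormedSpace.exp (τ • V) :=
  continuous_pi fun i => continuous_pi fun j => continuous_iff_continuousAt.2 fun t =>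
    (hasDerivAt_exp_smul_apply V i j t).continuousAt

lemma continuous_exp_one_sub_smul (V : Matrix n n ℝ) :
    Continuous fun τ : ℝ => NormedSpace.exp ((1 - τ) • V) :=
  (continuous_exp_smul V).comp (continuous_const.sub continuous_id)

end Exp

section Phi

variable {d : ℕ}

lemma phi_mul_self (V : Matrix (Fin d) (Fin d) ℝ) : phi V * V = NormedSpace.exp V - 1 := by
  rw [phi, of_intervalIntegral_mul (continuous_exp_one_sub_smul V)]
  ext i j
  have hderiv (t : ℝ) : HasDerivAt (fun τ : ℝ => -NormedSpace.exp ((1 - τ) • V) i j)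
      ((NormedSpace.exp ((1 - t) • V) * V) i j) t :=
    ((hasDerivAt_exp_smul_apply V i j (1 - t)).comp t
      ((hasDerivAt_id t).const_sub 1)).neg.congr_deriv (by ring)
  rw [of_apply, intervalIntegral.integral_eq_sub_of_hasDerivAt (fun t _ => hderiv t)
    ((continuous_exp_one_sub_smul V).matrix_mul continuous_const |>.matrix_elem i j
      |>.intervalIntegrable 0 1)]
  simp only [sub_self, zero_smul, NormedSpace.exp_zero, sub_zero, one_smul, sub_neg_eq_add,
    Matrix.sub_apply]
  ring

lemma SemiconjBy.phi_right {A V W : Matrix (Fin d) (Fin d) ℝ} (h : SemiconjBy A V W) :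
    SemiconjBy A (phi V) (phi W) := by
  have hexp (τ : ℝ) : A * NormedSpace.exp ((1 - τ) • V) = NormedSpace.exp ((1 - τ) • W) * A :=
    (h.smul_right (1 - τ)).matrix_exp_right
  rw [SemiconjBy, phi, phi, mul_of_intervalIntegral _ (continuous_exp_one_sub_smul V),
    of_intervalIntegral_mul (continuous_exp_one_sub_smul W)]
  simp only [hexp]

lemma phi_neg_mul_exp (X : Matrix (Fin d) (Fin d) ℝ) :
    phi (-X) * NormedSpace.exp X = phi X := by
  have hexp (τ : ℝ) :
      NormedSpace.exp ((1 - τ) • -X) * NormedSpace.exp X = NormedSpace.exp (τ • X) := by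
    rw [← exp_add_of_commute _ _ ((Commute.refl X).neg_left.smul_left _)]
    congr 1
    module
  rw [phi, phi, of_intervalIntegral_mul (continuous_exp_one_sub_smul _)]
  ext i j
  simp only [of_apply, hexp]
  simpa using (intervalIntegral.integral_comp_sub_left
    (fun τ => NormedSpace.exp (τ • X) i j) 1 (a := 0) (b := 1)).symm

lemma phi_transpose (V : Matrix (Fin d) (Fin d) ℝ) : (phi V)ᵀ = phi Vᵀ := by
  ext i j
  simp only [transpose_apply, phi, of_apply]
  congr 1 with τ
  rw [← transpose_smul, exp_transpose, transpose_apply]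

end Phi

section Energy

variable {n : Type*} [Fintype n]

noncomputable def quadraticEnergy (N : Matrix n n ℝ) (w y : n → ℝ) : ℝ := y ⬝ᵥ N *ᵥ y / 2 + y ⬝ᵥ w

lemma mulVec_dotProduct_mulVec_mulVec (C N D : Matrix n n ℝ) (u v : n → ℝ) :
    C *ᵥ u ⬝ᵥ N *ᵥ D *ᵥ v = u ⬝ᵥ (Cᵀ * N * D) *ᵥ v := by
  rw [← mulVec_mulVec, ← mulVec_mulVec, dotProduct_mulVec u Cᵀ, vecMul_transpose]

lemma quadraticEnergy_mulVec_add_mulVec [DecidableEq n] {N A B : Matrix n n ℝ} (hN : Nᵀ = N)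
    (hA : Aᵀ * N * A = N) (hAB : Aᵀ * N * B = 1 - Aᵀ) (hB : Bᵀ * N * B + Bᵀ + B = 0)
    (w x : n → ℝ) :
    quadraticEnergy N w (A *ᵥ x + B *ᵥ w) = quadraticEnergy N w x := by
  have hBA : Bᵀ * N * A = 1 - A := by
    simpa [transpose_mul, hN, Matrix.mul_assoc] using congrArg transpose hAB
  have hBB : Bᵀ * N * B = -Bᵀ - B := by
    rw [← sub_eq_zero, ← hB]
    abel
  simp only [quadraticEnergy, mulVec_add, add_dotProduct, dotProduct_add,
    mulVec_dotProduct_mulVec_mulVec, hA, hAB, hBA, hBB]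
  simp only [sub_mulVec, neg_mulVec, one_mulVec, dotProduct_sub, dotProduct_neg,
    dotProduct_transpose_mulVec, dotProduct_comm _ w]
  ring

end Energy

section SkewFlow

variable {d : ℕ}

lemma mul_phi_mul_eq_exp_sub_one (M Q : Matrix (Fin d) (Fin d) ℝ) :
    M * (phi (Q * M) * Q) = NormedSpace.exp (M * Q) - 1 := by
  have hsemi : SemiconjBy M (Q * M) (M * Q) := (Matrix.mul_assoc M Q M).symm
  rw [← Matrix.mul_assoc, hsemi.phi_right.eq, Matrix.mul_assoc, phi_mul_self]

theorem quadraticEnergy_exp_add_phi {M Q : Matrix (Fin d) (Fin d) ℝ} (hM : Mᵀ = M)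
    (hQ : Qᵀ = -Q) (w x : Fin d → ℝ) :
    quadraticEnergy M w (NormedSpace.exp (Q * M) *ᵥ x + (phi (Q * M) * Q) *ᵥ w) =
      quadraticEnergy M w x := by
  have hVt : (Q * M)ᵀ = -(M * Q) := by rw [transpose_mul, hM, hQ, Matrix.mul_neg]
  have hAt : (NormedSpace.exp (Q * M))ᵀ = NormedSpace.exp (-(M * Q)) := by
    rw [← exp_transpose, hVt]
  have hBt : (phi (Q * M) * Q)ᵀ = -(Q * phi (-(M * Q))) := by
    rw [transpose_mul, hQ, phi_transpose, hVt, Matrix.neg_mul]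
  have hB : phi (Q * M) * Q = Q * phi (M * Q) :=
    (SemiconjBy.phi_right (Matrix.mul_assoc Q M Q).symm).eq.symm
  have hMB := mul_phi_mul_eq_exp_sub_one M Q
  refine quadraticEnergy_mulVec_add_mulVec hM ?_ ?_ ?_ w x
  · have hMA : M * NormedSpace.exp (Q * M) = NormedSpace.exp (M * Q) * M :=
      (SemiconjBy.matrix_exp_right (Matrix.mul_assoc M Q M).symm).eq
    rw [hAt, Matrix.mul_assoc, hMA, ← Matrix.mul_assoc, exp_neg_mul_exp, Matrix.one_mul]
  · rw [hAt, Matrix.mul_assoc, hMB, Matrix.mul_sub, Matrix.mul_one, exp_neg_mul_exp]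
  · rw [Matrix.mul_assoc, hMB, hBt, Matrix.neg_mul, Matrix.mul_assoc, Matrix.mul_sub,
      phi_neg_mul_exp, Matrix.mul_one, Matrix.mul_sub, hB]
    abel

end SkewFlow

theorem stmt_16_general {d : ℕ} (M Q : Matrix (Fin d) (Fin d) ℝ)
    (hM : Mᵀ = M) (hQ : Qᵀ = -Q)
    (k : ℕ) (h : ℝ) (w x : Fin d → ℝ)
    (x' : Fin d → ℝ)
    (hx' : x' = NormedSpace.exp (((k : ℝ) * h) • (Q * M)) *ᵥ x +
        ((k : ℝ) * h) • (phi (((k : ℝ) * h) • (Q * M)) *ᵥ (Q *ᵥ w))) :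
    (1 / (2 * (k : ℝ))) * (x' ⬝ᵥ M *ᵥ x') - (1 / (2 * (k : ℝ))) * (x ⬝ᵥ M *ᵥ x) +
      (1 / (k : ℝ)) * ((x' - x) ⬝ᵥ w) = 0 := by
  set s : ℝ := (k : ℝ) * h
  have hsQ : (s • Q)ᵀ = -(s • Q) := by rw [transpose_smul, hQ, smul_neg]
  have hx'_flow : x' = NormedSpace.exp ((s • Q) * M) *ᵥ x + (phi ((s • Q) * M) * (s • Q)) *ᵥ w := by
    rw [hx', smul_mul_assoc, mul_smul_comm, smul_mulVec, mulVec_mulVec]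
  have hE := quadraticEnergy_exp_add_phi hM hsQ w x
  rw [← hx'_flow, quadraticEnergy, quadraticEnergy] at hE
  rw [sub_dotProduct]
  linear_combination (1 / (k : ℝ)) * hE

theorem stmt_16 {d : ℕ} (M Q : Matrix (Fin d) (Fin d) ℝ)
    (hM : Mᵀ = M) (hQ : Qᵀ = -Q)
    (k : ℕ) (hk : 0 < k) (h : ℝ) (w x : Fin d → ℝ)
    (x' : Fin d → ℝ)
    (hx' : x' = NormedSpace.exp (((k : ℝ) * h) • (Q * M)) *ᵥ x +
        ((k : ℝ) * h) • (phi (((k : ℝ) * h) • (Q * M)) *ᵥ (Q *ᵥ w))) :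
    (1 / (2 * (k : ℝ))) * (x' ⬝ᵥ M *ᵥ x') - (1 / (2 * (k : ℝ))) * (x ⬝ᵥ M *ᵥ x) +
      (1 / (k : ℝ)) * ((x' - x) ⬝ᵥ w) = 0 :=
  stmt_16_general M Q hM hQ k h w x x' hx'
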